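/- Let μ < 0, a = √(-μ), and let r be a complex number with cosh(a·r) ≠ 0. If λ := a·tanh(a·r) is a real number with |λ| < a, then λ = a·tanh(a·Re r) and there exists an integer k such that Im r = k·π/a. -/

import Mathlib

/-! If `tanh z = t` with `t` real and `|t| < 1`, compare imaginary parts in
`sinh z = t cosh z`: with `z = x + iy` this reads `sin y (cosh x - t sinh x) = 0`, and
`cosh x > |sinh x|` forces `sin y = 0`. Then `cos y = ±1`, and the real parts give
`sinh x = t cosh x`, i.e. `tanh x = t`. Apply this to `z = a r` and `t = λ / a`. -/

open Complex Real

theorem Real.cosh_sub_mul_sinh_pos {t : ℝ} (ht : |t| < 1) (x : ℝ) : 0 < cosh x - t * sinh x := by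
  have hsinh : |sinh x| < cosh x := by
    refine abs_lt.2 ⟨?_, sinh_lt_cosh x⟩
    linarith [sinh_lt_cosh (-x), sinh_neg x, cosh_neg x]
  have : t * sinh x ≤ |sinh x| :=
    calc t * sinh x ≤ |t * sinh x| := le_abs_self _
      _ = |t| * |sinh x| := abs_mul _ _
      _ ≤ |sinh x| := mul_le_of_le_one_left (abs_nonneg _) ht.le
  linarith

namespace Complex

theorem sinh_re (z : ℂ) : (sinh z).re = Real.sinh z.re * Real.cos z.im := by
  nth_rw 1 [← re_add_im z]
  rw [sinh_add, sinh_mul_I, cosh_mul_I, ← ofReal_sin, ← ofReal_cos, ← ofReal_sinh, ← ofReal_cosh]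
  simp only [add_re, re_ofReal_mul, mul_I_re, ofReal_re, ofReal_im, neg_zero, mul_zero, add_zero]

theorem sinh_im (z : ℂ) : (sinh z).im = Real.cosh z.re * Real.sin z.im := by
  nth_rw 1 [← re_add_im z]
  rw [sinh_add, sinh_mul_I, cosh_mul_I, ← ofReal_sin, ← ofReal_cos, ← ofReal_sinh, ← ofReal_cosh]
  simp only [add_im, im_ofReal_mul, mul_I_im, ofReal_re, ofReal_im, mul_zero, zero_add]

theorem cosh_re (z : ℂ) : (cosh z).re = Real.cosh z.re * Real.cos z.im := by
  nth_rw 1 [← re_add_im z]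
  rw [cosh_add, sinh_mul_I, cosh_mul_I, ← ofReal_sin, ← ofReal_cos, ← ofReal_sinh, ← ofReal_cosh]
  simp only [add_re, re_ofReal_mul, mul_I_re, ofReal_re, ofReal_im, neg_zero, mul_zero, add_zero]

theorem cosh_im (z : ℂ) : (cosh z).im = Real.sinh z.re * Real.sin z.im := by
  nth_rw 1 [← re_add_im z]
  rw [cosh_add, sinh_mul_I, cosh_mul_I, ← ofReal_sin, ← ofReal_cos, ← ofReal_sinh, ← ofReal_cosh]
  simp only [add_im, im_ofReal_mul, mul_I_im, ofReal_re, ofReal_im, mul_zero, zero_add]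

variable {z : ℂ} {t : ℝ}

theorem sin_im_eq_zero_of_sinh_eq_mul_cosh (ht : |t| < 1) (h : sinh z = t * cosh z) :
    Real.sin z.im = 0 := by
  have him : Real.cosh z.re * Real.sin z.im = t * (Real.sinh z.re * Real.sin z.im) := by
    rw [← sinh_im, ← cosh_im, ← im_ofReal_mul, h]
  have : Real.sin z.im * (Real.cosh z.re - t * Real.sinh z.re) = 0 := by linear_combination him
  exact (mul_eq_zero.1 this).resolve_right (Real.cosh_sub_mul_sinh_pos ht z.re).ne'

theorem tanh_re_of_sinh_eq_mul_cosh (ht : |t| < 1) (h : sinh z = t * cosh z) :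
    Real.tanh z.re = t := by
  have hsin := sin_im_eq_zero_of_sinh_eq_mul_cosh ht h
  have hcos : Real.cos z.im ≠ 0 := by
    intro hcos
    simpa [hsin, hcos] using Real.sin_sq_add_cos_sq z.im
  have hre : Real.sinh z.re * Real.cos z.im = t * (Real.cosh z.re * Real.cos z.im) := by
    rw [← sinh_re, ← cosh_re, ← re_ofReal_mul, h]
  rw [Real.tanh_eq_sinh_div_cosh, div_eq_iff (Real.cosh_pos _).ne']
  exact mul_right_cancel₀ hcos (by linear_combination hre)

end Complex

theorem stmt_10 (mu : ℝ) (hmu : mu < 0) (r : ℂ)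
    (hcosh : Complex.cosh ((Real.sqrt (-mu) : ℂ) * r) ≠ 0)
    (lam : ℝ)
    (hlam : (lam : ℂ) = (Real.sqrt (-mu) : ℂ) * Complex.tanh ((Real.sqrt (-mu) : ℂ) * r))
    (habs : |lam| < Real.sqrt (-mu)) :
    lam = Real.sqrt (-mu) * Real.tanh (Real.sqrt (-mu) * r.re) ∧
    ∃ k : ℤ, r.im = k * Real.pi / Real.sqrt (-mu) := by
  set a := Real.sqrt (-mu)
  have ha : 0 < a := Real.sqrt_pos.2 (neg_pos.2 hmu)
  have ht : |lam / a| < 1 := by rwa [abs_div, abs_of_pos ha, div_lt_one ha]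
  have hsinh : sinh ((a : ℂ) * r) = ((lam / a : ℝ) : ℂ) * cosh ((a : ℂ) * r) := by
    have haC : (a : ℂ) ≠ 0 := ofReal_ne_zero.2 ha.ne'
    rw [Complex.tanh_eq_sinh_div_cosh] at hlam
    push_cast
    field_simp at hlam ⊢
    linear_combination -hlam
  obtain ⟨k, hk⟩ := Real.sin_eq_zero_iff.1 (sin_im_eq_zero_of_sinh_eq_mul_cosh ht hsinh)
  have htanh := tanh_re_of_sinh_eq_mul_cosh ht hsinh
  rw [re_ofReal_mul] at htanh
  rw [im_ofReal_mul] at hk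
  refine ⟨?_, k, ?_⟩
  · rw [htanh]; field_simp
  · rw [eq_div_iff ha.ne', mul_comm, hk]
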